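/- arXiv:math/9909077 — 2 statements merged into one kernel-verified Lean document; each statement's English description precedes it below -/
import Mathlib

section
/- If B₁ and B₂ are normal crystals (for a fixed root datum), then their Kashiwara tensor product B₁ ⊗ B₂ (with the standard tensor product rules for wt, e_i, f_i, ε_i, φ_i) is again a crystal, i.e. satisfies axioms (A), (B), (C) of crystals. -/
namespace CrystalPaper

/-- A pre-crystal: the raw data of a crystal for index set `I` and weight lattice `Λ`. -/
structure PreCrystal (I Λ : Type) [AddCommGroup Λ] where
  B : Type
  wt : B → Λ
  eps : B → I → ℤ
  phi : B → I → ℤ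
  e : I → B → Option B
  f : I → B → Option B

variable {I Λ : Type} [AddCommGroup Λ]

/-- Iterate a partial map `n` times. -/
def iterOpt {β : Type} (g : β → Option β) : ℕ → β → Option β
  | 0, b => some b
  | n + 1, b => (g b).bind (iterOpt g n)

/-- The crystal axioms (A), (B), (C), relative to the simple roots `sr i = αᵢ`
and the pairing `pair μ i = ⟨μ, αᵢ^∨⟩`. -/
def IsCrystal (sr : I → Λ) (pair : Λ → I → ℤ) (C : PreCrystal I Λ) : Prop :=
  (∀ b i, C.phi b i = C.eps b i + pair (C.wt b) i) ∧
  (∀ i b b', C.e i b = some b' →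
      C.wt b' = C.wt b + sr i ∧ C.eps b' i = C.eps b i - 1 ∧ C.phi b' i = C.phi b i + 1) ∧
  (∀ i b b', C.f i b = some b' →
      C.wt b' = C.wt b - sr i ∧ C.eps b' i = C.eps b i + 1 ∧ C.phi b' i = C.phi b i - 1) ∧
  (∀ i b b', C.e i b = some b' ↔ C.f i b' = some b)

/-- Normality: `εᵢ(b) = max {n | eᵢⁿ b ≠ 0}` and `φᵢ(b) = max {n | fᵢⁿ b ≠ 0}`. -/
def IsNormal (C : PreCrystal I Λ) : Prop :=
  ∀ b i,
    (0 ≤ C.eps b i ∧ iterOpt (C.e i) (C.eps b i).toNat b ≠ none ∧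
      iterOpt (C.e i) ((C.eps b i).toNat + 1) b = none) ∧
    (0 ≤ C.phi b i ∧ iterOpt (C.f i) (C.phi b i).toNat b ≠ none ∧
      iterOpt (C.f i) ((C.phi b i).toNat + 1) b = none)

/-- Kashiwara's tensor product of (pre-)crystals. -/
@[reducible] def tensor (C D : PreCrystal I Λ) : PreCrystal I Λ where
  B := C.B × D.B
  wt p := C.wt p.1 + D.wt p.2
  eps p i := max (D.eps p.2 i) (C.eps p.1 i - D.phi p.2 i + D.eps p.2 i)
  phi p i := max (C.phi p.1 i) (D.phi p.2 i - C.eps p.1 i + C.phi p.1 i)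
  e i p :=
    if C.eps p.1 i > D.phi p.2 i then (C.e i p.1).map fun b => (b, p.2)
    else (D.e i p.2).map fun b => (p.1, b)
  f i p :=
    if C.eps p.1 i ≥ D.phi p.2 i then (C.f i p.1).map fun b => (b, p.2)
    else (D.f i p.2).map fun b => (p.1, b)

/-- `B` is generated from `b0` by the operators `fᵢ`. -/
def GeneratedByF (C : PreCrystal I Λ) (b0 : C.B) : Prop :=
  ∀ b : C.B, ∃ w : List I,
    List.foldl (fun (ob : Option C.B) i => ob.bind (C.f i)) (some b0) w = some b

/-- `b0` is a highest weight element of weight `lam` generating `C`. -/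
def IsHighestWeight (C : PreCrystal I Λ) (lam : Λ) (b0 : C.B) : Prop :=
  C.wt b0 = lam ∧ (∀ i, C.e i b0 = none) ∧ GeneratedByF C b0

/-- Dominance order: `μ ≤ lam` iff `lam - μ` is a nonnegative integer
combination of the simple roots. -/
def DomLE (sr : I → Λ) (μ lam : Λ) : Prop :=
  ∃ c : I →₀ ℕ, lam - μ = c.sum fun i n => (n : ℤ) • sr i

/-- Connectedness under the partial operators `eᵢ`, `fᵢ`. -/
def Connected (C : PreCrystal I Λ) : C.B → C.B → Prop :=
  Relation.ReflTransGen fun a b => ∃ i, C.e i a = some b ∨ C.f i a = some b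

end CrystalPaper

namespace CrystalPaper

variable {I Λ : Type} [AddCommGroup Λ] {C D : PreCrystal I Λ} {i : I} {b₁ : C.B} {b₂ : D.B}

theorem tensor_e_of_lt (h : D.phi b₂ i < C.eps b₁ i) :
    (tensor C D).e i (b₁, b₂) = (C.e i b₁).map (·, b₂) :=
  if_pos h

theorem tensor_e_of_le (h : C.eps b₁ i ≤ D.phi b₂ i) :
    (tensor C D).e i (b₁, b₂) = (D.e i b₂).map (b₁, ·) :=
  if_neg h.not_gt

theorem tensor_f_of_le (h : D.phi b₂ i ≤ C.eps b₁ i) :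
    (tensor C D).f i (b₁, b₂) = (C.f i b₁).map (·, b₂) :=
  if_pos h

theorem tensor_f_of_lt (h : C.eps b₁ i < D.phi b₂ i) :
    (tensor C D).f i (b₁, b₂) = (D.f i b₂).map (b₁, ·) :=
  if_neg h.not_ge

variable {sr : I → Λ} {pair : Λ → I → ℤ}

theorem tensor_phi_eq (hpair : ∀ μ ν i, pair (μ + ν) i = pair μ i + pair ν i)
    (hC : IsCrystal sr pair C) (hD : IsCrystal sr pair D) (p : (tensor C D).B) (i : I) :
    (tensor C D).phi p i = (tensor C D).eps p i + pair ((tensor C D).wt p) i := by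
  have h₁ := hC.1 p.1 i
  have h₂ := hD.1 p.2 i
  simp only [hpair]
  omega

theorem tensor_e_spec (hC : IsCrystal sr pair C) (hD : IsCrystal sr pair D)
    {p q : (tensor C D).B} (h : (tensor C D).e i p = some q) :
    (tensor C D).wt q = (tensor C D).wt p + sr i ∧
      (tensor C D).eps q i = (tensor C D).eps p i - 1 ∧
      (tensor C D).phi q i = (tensor C D).phi p i + 1 := by
  obtain ⟨b₁, b₂⟩ := p
  rcases lt_or_ge (D.phi b₂ i) (C.eps b₁ i) with hlt | hle
  · rw [tensor_e_of_lt hlt, Option.map_eq_some_iff] at h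
    obtain ⟨b₁', hb, rfl⟩ := h
    obtain ⟨hwt, heps, hphi⟩ := hC.2.1 i b₁ b₁' hb
    simp only [hwt, heps, hphi]
    exact ⟨by abel, by omega, by omega⟩
  · rw [tensor_e_of_le hle, Option.map_eq_some_iff] at h
    obtain ⟨b₂', hb, rfl⟩ := h
    obtain ⟨hwt, heps, hphi⟩ := hD.2.1 i b₂ b₂' hb
    simp only [hwt, heps, hphi]
    exact ⟨by abel, by omega, by omega⟩

theorem tensor_f_spec (hC : IsCrystal sr pair C) (hD : IsCrystal sr pair D)
    {p q : (tensor C D).B} (h : (tensor C D).f i p = some q) :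
    (tensor C D).wt q = (tensor C D).wt p - sr i ∧
      (tensor C D).eps q i = (tensor C D).eps p i + 1 ∧
      (tensor C D).phi q i = (tensor C D).phi p i - 1 := by
  obtain ⟨b₁, b₂⟩ := p
  rcases le_or_gt (D.phi b₂ i) (C.eps b₁ i) with hle | hlt
  · rw [tensor_f_of_le hle, Option.map_eq_some_iff] at h
    obtain ⟨b₁', hb, rfl⟩ := h
    obtain ⟨hwt, heps, hphi⟩ := hC.2.2.1 i b₁ b₁' hb
    simp only [hwt, heps, hphi]
    exact ⟨by abel, by omega, by omega⟩
  · rw [tensor_f_of_lt hlt, Option.map_eq_some_iff] at h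
    obtain ⟨b₂', hb, rfl⟩ := h
    obtain ⟨hwt, heps, hphi⟩ := hD.2.2.1 i b₂ b₂' hb
    simp only [hwt, heps, hphi]
    exact ⟨by abel, by omega, by omega⟩

/- The tie-breaking is what makes `f` undo `e`: acting on the left factor lowers `ε` there by
one, so afterwards `ε(b₁') ≥ φ(b₂)` and `f` acts on the left again; acting on the right raises
`φ` there, so afterwards `ε(b₁) < φ(b₂')` and `f` acts on the right again. -/
theorem tensor_e_eq_some_iff (hC : IsCrystal sr pair C) (hD : IsCrystal sr pair D)
    (p q : (tensor C D).B) : (tensor C D).e i p = some q ↔ (tensor C D).f i q = some p := by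
  constructor
  · intro h
    obtain ⟨b₁, b₂⟩ := p
    rcases lt_or_ge (D.phi b₂ i) (C.eps b₁ i) with hlt | hle
    · rw [tensor_e_of_lt hlt, Option.map_eq_some_iff] at h
      obtain ⟨b₁', hb, rfl⟩ := h
      have heps := (hC.2.1 i b₁ b₁' hb).2.1
      rw [tensor_f_of_le (by omega), (hC.2.2.2 i b₁ b₁').mp hb, Option.map_some]
    · rw [tensor_e_of_le hle, Option.map_eq_some_iff] at h
      obtain ⟨b₂', hb, rfl⟩ := h
      have hphi := (hD.2.1 i b₂ b₂' hb).2.2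
      rw [tensor_f_of_lt (by omega), (hD.2.2.2 i b₂ b₂').mp hb, Option.map_some]
  · intro h
    obtain ⟨c₁, c₂⟩ := q
    rcases le_or_gt (D.phi c₂ i) (C.eps c₁ i) with hle | hlt
    · rw [tensor_f_of_le hle, Option.map_eq_some_iff] at h
      obtain ⟨c₁', hc, rfl⟩ := h
      have heps := (hC.2.2.1 i c₁ c₁' hc).2.1
      rw [tensor_e_of_lt (by omega), (hC.2.2.2 i c₁' c₁).mpr hc, Option.map_some]
    · rw [tensor_f_of_lt hlt, Option.map_eq_some_iff] at h
      obtain ⟨c₂', hc, rfl⟩ := h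
      have hphi := (hD.2.2.1 i c₂ c₂' hc).2.2
      rw [tensor_e_of_le (by omega), (hD.2.2.2 i c₂' c₂).mpr hc, Option.map_some]

end CrystalPaper

open CrystalPaper in
theorem tensor_isCrystal_general {I Λ : Type} [AddCommGroup Λ] (sr : I → Λ) (pair : Λ → I → ℤ)
    (hpair : ∀ μ ν i, pair (μ + ν) i = pair μ i + pair ν i)
    (C D : PreCrystal I Λ)
    (hC : IsCrystal sr pair C) (hD : IsCrystal sr pair D) :
    IsCrystal sr pair (tensor C D) :=
  ⟨tensor_phi_eq hpair hC hD, fun _ _ _ => tensor_e_spec hC hD,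
    fun _ _ _ => tensor_f_spec hC hD, fun _ => tensor_e_eq_some_iff hC hD⟩

open CrystalPaper in
/-- the Kashiwara tensor product of two normal crystals is a crystal. -/
theorem tensor_isCrystal {I Λ : Type} [AddCommGroup Λ] (sr : I → Λ) (pair : Λ → I → ℤ)
    (hpair : ∀ μ ν i, pair (μ + ν) i = pair μ i + pair ν i)
    (C D : PreCrystal I Λ)
    (hC : IsCrystal sr pair C) (hD : IsCrystal sr pair D)
    (hCn : IsNormal C) (hDn : IsNormal D) :
    IsCrystal sr pair (tensor C D) :=
  tensor_isCrystal_general sr pair hpair C D hC hD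
end

section
/- For the rank-1 root datum (Λ = ℤ, α = 2): in B(l₁) ⊗ B(l₂), the element m₁ ⊗ m₂ lies in the connected component (under e, f) whose highest weight element is l₁ ⊗ (n − l₁), where n = max{l₁ − m₂, m₁ + l₂}. Equivalently, applying e repeatedly to m₁ ⊗ m₂ until reaching an element killed by e yields l₁ ⊗ (n−l₁) with n = max{l₁ − m₂, m₁ + l₂}. -/
namespace CrystalPaper

/-- The sl₂-crystal B(l) on the set {l, l-2, ..., -l}, for the rank-1 root datum
with weight lattice ℤ, simple root α = 2 and pairing ⟨m, α^∨⟩ = m. -/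
def Bsl2 (l : ℤ) : PreCrystal Unit ℤ where
  B := { m : ℤ // -l ≤ m ∧ m ≤ l ∧ (l - m) % 2 = 0 }
  wt b := b.1
  eps b _ := (l - b.1) / 2
  phi b _ := (l + b.1) / 2
  e _ b :=
    if h : b.1 < l then some ⟨b.1 + 2, by obtain ⟨h1, h2, h3⟩ := b.2; omega⟩ else none
  f _ b :=
    if h : -l < b.1 then some ⟨b.1 - 2, by obtain ⟨h1, h2, h3⟩ := b.2; omega⟩ else none

/-- Disjoint union of a family of (pre-)crystals. -/
def sigmaCrystal {I Λ : Type} [AddCommGroup Λ] {ι : Type} (F : ι → PreCrystal I Λ) :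
    PreCrystal I Λ where
  B := Σ j : ι, (F j).B
  wt p := (F p.1).wt p.2
  eps p i := (F p.1).eps p.2 i
  phi p i := (F p.1).phi p.2 i
  e i p := ((F p.1).e i p.2).map fun b => ⟨p.1, b⟩
  f i p := ((F p.1).f i p.2).map fun b => ⟨p.1, b⟩

end CrystalPaper

/-!
Write `p = m₁ ⊗ m₂` and `n(p) = max (l₁ - m₂) (m₁ + l₂)`. The operator `e` never changes `n`:
it raises `m₁` only when `l₁ - m₁ > l₂ + m₂`, and then the maximum is `l₁ - m₂` before and after;
otherwise it raises `m₂`, and then `l₁ - m₁ ≤ l₂ + m₂` makes the maximum `m₁ + l₂` before and after.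
Each step raises the weight `m₁ + m₂ ≤ l₁ + l₂` by `2`, so the iteration stops, and an element
killed by `e` has `m₂ = l₂` and `l₁ - m₁ ≤ 2 l₂`, so its weight `m₁ + l₂` is `n`.
-/

namespace CrystalPaper

section IterOpt

variable {β : Type} {g : β → Option β}

theorem iterOpt_succ_of_eq_some {b c : β} (h : g b = some c) (k : ℕ) :
    iterOpt g (k + 1) b = iterOpt g k c := by
  simp [iterOpt, h]

theorem reflTransGen_of_iterOpt_eq_some {k : ℕ} {b c : β} (h : iterOpt g k b = some c) :
    Relation.ReflTransGen (fun a a' => g a = some a') b c := by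
  induction k generalizing b with
  | zero => cases h; rfl
  | succ k ih =>
    cases hb : g b with
    | none => simp [iterOpt, hb] at h
    | some b' => exact .head hb (ih (iterOpt_succ_of_eq_some hb k ▸ h))

theorem exists_iterOpt_eq_some_and_eq_none (μ : β → ℕ) (hμ : ∀ a a', g a = some a' → μ a' < μ a)
    (b : β) : ∃ k c, iterOpt g k b = some c ∧ g c = none := by
  induction b using (measure μ).wf.induction with
  | h b ih =>
    cases hb : g b with
    | none => exact ⟨0, b, rfl, hb⟩
    | some b' =>
      obtain ⟨k, c, hk, hc⟩ := ih b' (hμ b b' hb)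
      exact ⟨k + 1, c, (iterOpt_succ_of_eq_some hb k).trans hk, hc⟩

end IterOpt

section Tensor

variable {I Λ : Type} [AddCommGroup Λ] {C D : PreCrystal I Λ} {i : I}

theorem tensor_e_eq_some {p q : (tensor C D).B} (h : (tensor C D).e i p = some q) :
    (D.phi p.2 i < C.eps p.1 i ∧ C.e i p.1 = some q.1 ∧ q.2 = p.2) ∨
      (C.eps p.1 i ≤ D.phi p.2 i ∧ D.e i p.2 = some q.2 ∧ q.1 = p.1) := by
  simp only [tensor] at h
  split_ifs at h with hlt
  · obtain ⟨b, hb, rfl⟩ := Option.map_eq_some_iff.mp h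
    exact .inl ⟨hlt, hb, rfl⟩
  · obtain ⟨b, hb, rfl⟩ := Option.map_eq_some_iff.mp h
    exact .inr ⟨not_lt.mp hlt, hb, rfl⟩

theorem tensor_e_eq_none {p : (tensor C D).B} (h : (tensor C D).e i p = none) :
    (D.phi p.2 i < C.eps p.1 i ∧ C.e i p.1 = none) ∨
      (C.eps p.1 i ≤ D.phi p.2 i ∧ D.e i p.2 = none) := by
  simp only [tensor] at h
  split_ifs at h with hlt
  · exact .inl ⟨hlt, Option.map_eq_none_iff.mp h⟩
  · exact .inr ⟨not_lt.mp hlt, Option.map_eq_none_iff.mp h⟩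

end Tensor

theorem Bsl2_e_eq_some {l : ℤ} {b b' : (Bsl2 l).B} (h : (Bsl2 l).e () b = some b') :
    b'.1 = b.1 + 2 := by
  simp only [Bsl2] at h
  split_ifs at h
  cases h
  rfl

theorem Bsl2_e_eq_none {l : ℤ} {b : (Bsl2 l).B} (h : (Bsl2 l).e () b = none) : b.1 = l := by
  simp only [Bsl2, dite_eq_right_iff, reduceCtorEq, imp_false, not_lt] at h
  exact le_antisymm b.2.2.1 h

section Bsl2Tensor

variable {l1 l2 : ℤ}

theorem Bsl2_tensor_wt_le (p : (tensor (Bsl2 l1) (Bsl2 l2)).B) :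
    (tensor (Bsl2 l1) (Bsl2 l2)).wt p ≤ l1 + l2 :=
  add_le_add p.1.2.2.1 p.2.2.2.1

theorem Bsl2_tensor_e_eq_some {p q : (tensor (Bsl2 l1) (Bsl2 l2)).B}
    (h : (tensor (Bsl2 l1) (Bsl2 l2)).e () p = some q) :
    (tensor (Bsl2 l1) (Bsl2 l2)).wt q = (tensor (Bsl2 l1) (Bsl2 l2)).wt p + 2 ∧
      max (l1 - q.2.1) (q.1.1 + l2) = max (l1 - p.2.1) (p.1.1 + l2) := by
  -- the parities make the divisions by 2 in `ε` and `φ` exact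
  obtain ⟨-, -, hpar1⟩ := p.1.2
  obtain ⟨-, -, hpar2⟩ := p.2.2
  simp only [Bsl2]
  rcases tensor_e_eq_some h with ⟨hlt, he, hq⟩ | ⟨hle, he, hq⟩
  · simp only [Bsl2] at hlt
    rw [hq, Bsl2_e_eq_some he]
    omega
  · simp only [Bsl2] at hle
    rw [hq, Bsl2_e_eq_some he]
    omega

theorem Bsl2_tensor_wt_of_e_eq_none {p : (tensor (Bsl2 l1) (Bsl2 l2)).B}
    (h : (tensor (Bsl2 l1) (Bsl2 l2)).e () p = none) :
    (tensor (Bsl2 l1) (Bsl2 l2)).wt p = max (l1 - p.2.1) (p.1.1 + l2) := by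
  obtain ⟨-, -, hpar1⟩ := p.1.2
  obtain ⟨hlow2, -, -⟩ := p.2.2
  simp only [Bsl2]
  rcases tensor_e_eq_none h with ⟨hlt, he⟩ | ⟨hle, he⟩
  · simp only [Bsl2, Bsl2_e_eq_none he] at hlt
    omega
  · simp only [Bsl2] at hle
    rw [Bsl2_e_eq_none he] at hle ⊢
    omega

end Bsl2Tensor

end CrystalPaper

open CrystalPaper in
theorem Bsl2_tensor_component_general (l1 l2 : ℤ)
    (p : (tensor (Bsl2 l1) (Bsl2 l2)).B) :
    ∃ (k : ℕ) (q : (tensor (Bsl2 l1) (Bsl2 l2)).B),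
      iterOpt ((tensor (Bsl2 l1) (Bsl2 l2)).e ()) k p = some q ∧
      (∀ i, (tensor (Bsl2 l1) (Bsl2 l2)).e i q = none) ∧
      Connected (tensor (Bsl2 l1) (Bsl2 l2)) p q ∧
      (tensor (Bsl2 l1) (Bsl2 l2)).wt q = max (l1 - p.2.1) (p.1.1 + l2) := by
  obtain ⟨k, q, hk, hq⟩ := exists_iterOpt_eq_some_and_eq_none
    (g := (tensor (Bsl2 l1) (Bsl2 l2)).e ())
    (fun b => (l1 + l2 - (tensor (Bsl2 l1) (Bsl2 l2)).wt b).toNat)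
    (fun a b hab => by
      have := (Bsl2_tensor_e_eq_some hab).1
      have := Bsl2_tensor_wt_le b
      omega) p
  have hpq := reflTransGen_of_iterOpt_eq_some hk
  have hn : max (l1 - q.2.1) (q.1.1 + l2) = max (l1 - p.2.1) (p.1.1 + l2) :=
    (Relation.reflTransGen_le_of_equivalence_of_le
      (Setoid.ker fun b : (tensor (Bsl2 l1) (Bsl2 l2)).B => max (l1 - b.2.1) (b.1.1 + l2)).iseqv
      (fun a b hab => (Bsl2_tensor_e_eq_some hab).2.symm) _ _ hpq).symm
  refine ⟨k, q, hk, fun ⟨⟩ => hq, ?_, (Bsl2_tensor_wt_of_e_eq_none hq).trans hn⟩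
  exact Relation.ReflTransGen.mono (fun a b hab => ⟨(), .inl hab⟩) _ _ hpq

open CrystalPaper in
/-- in B(l₁) ⊗ B(l₂), applying e repeatedly to m₁ ⊗ m₂ until reaching an
element killed by e yields the highest weight element of its connected component, whose
weight is n = max(l₁ - m₂, m₁ + l₂) (the weight of l₁ ⊗ (n - l₁)). -/
theorem Bsl2_tensor_component (l1 l2 : ℤ) (h1 : 0 ≤ l1) (h2 : 0 ≤ l2)
    (p : (tensor (Bsl2 l1) (Bsl2 l2)).B) :
    ∃ (k : ℕ) (q : (tensor (Bsl2 l1) (Bsl2 l2)).B),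
      iterOpt ((tensor (Bsl2 l1) (Bsl2 l2)).e ()) k p = some q ∧
      (∀ i, (tensor (Bsl2 l1) (Bsl2 l2)).e i q = none) ∧
      Connected (tensor (Bsl2 l1) (Bsl2 l2)) p q ∧
      (tensor (Bsl2 l1) (Bsl2 l2)).wt q = max (l1 - p.2.1) (p.1.1 + l2) :=
  Bsl2_tensor_component_general l1 l2 p
end
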